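/- arXiv:1502.06986 — 3 statements merged into one kernel-verified Lean document; each statement's English description precedes it below -/
import Mathlib

section
/- In the inhomogeneous exponential corner growth model, for every k, l ∈ ℕ the annealed measure ℙ on ℝ_+^{ℕ²} is ergodic with respect to the shift θ_{k,l}, where θ_{k,l}(ω)(i,j) = ω(i+k, j+l) for i, j ∈ ℕ. That is, if B ⊂ ℝ_+^{ℕ²} is a Borel set with θ_{k,l}^{−1}(B) = B, then ℙ(B) ∈ {0, 1}. -/
/-!
Given the rates `p`, the quenched law `P p` has independent coordinates, and a
`θ_{k,l}`-invariant set is a tail event, so `P p B ∈ {0, 1}` by Kolmogorov's 0-1 law.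
Both `(P p).map θ_{k,l}` and `P (τ_k × τ_l p)` have independent coordinates with the same
exponential marginals, so they coincide; hence `p ↦ P p B` is invariant under the ergodic
shift `τ_k × τ_l`, thus a.e. equal to a constant `c ∈ {0, 1}`, and `ℙ B = ∫ P p B dμ = c`.
-/

open MeasureTheory ProbabilityTheory Filter Set Topology
open scoped ENNReal

noncomputable section

/-- Last-passage time `G(m, n)` over up-right lattice paths from site `(1,1)` to `(m,n)`;
the weight `W(i+1, j+1)` of site `(i+1, j+1)` is the coordinate `ω (i, j)`. -/
def lpp (ω : ℕ × ℕ → ℝ) : ℕ → ℕ → ℝ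
  | 0, _ => 0
  | _ + 1, 0 => 0
  | m + 1, n + 1 => max (lpp ω m (n + 1)) (lpp ω (m + 1) n) + ω (m, n)

/-- Left endpoint of the support of a Borel measure on `ℝ`. -/
def leftEdge (η : Measure ℝ) : ℝ := sSup {c : ℝ | η (Set.Iio c) = 0}

/-- Right endpoint of the support of a Borel measure on `ℝ`. -/
def rightEdge (η : Measure ℝ) : ℝ := sInf {c : ℝ | η (Set.Ioi c) = 0}

/-- The shift `τ_k × τ_l` acting on pairs of sequences. -/
def shiftPair (k l : ℕ) (p : (ℕ → ℝ) × (ℕ → ℝ)) : (ℕ → ℝ) × (ℕ → ℝ) :=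
  (fun n => p.1 (n + k), fun n => p.2 (n + l))

/-- The shift `θ_{k,l}` on weight configurations: `θ_{k,l}(ω)(i,j) = ω(i+k, j+l)`. -/
def shiftConfig (k l : ℕ) (ω : ℕ × ℕ → ℝ) : ℕ × ℕ → ℝ :=
  fun ij => ω (ij.1 + k, ij.2 + l)

namespace ProbabilityTheory

variable {ι κ E : Type*} [MeasurableSpace E]

theorem iIndepFun.eq_infinitePi_map_eval {ν : Measure (ι → E)}
    (h : iIndepFun (fun i (ω : ι → E) => ω i) ν) :
    ν = Measure.infinitePi fun i => ν.map fun ω => ω i := by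
  simpa using h.map_fun_eq_infinitePi_map fun i => measurable_pi_apply i

theorem iIndepFun.map_comp_eq_of_map_eval_eq {ν₁ : Measure (ι → E)} {ν₂ : Measure (κ → E)}
    {f : κ → ι} (hf : f.Injective)
    (h₁ : iIndepFun (fun i (ω : ι → E) => ω i) ν₁) (h₂ : iIndepFun (fun j (ω : κ → E) => ω j) ν₂)
    (hmarg : ∀ j, ν₁.map (fun ω => ω (f j)) = ν₂.map fun ω => ω j) :
    ν₁.map (fun ω j => ω (f j)) = ν₂ := by
  have := h₁.isProbabilityMeasure
  have _ (i : ι) : IsProbabilityMeasure (ν₁.map fun ω => ω i) :=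
    Measure.isProbabilityMeasure_map (measurable_pi_apply i).aemeasurable
  rw [h₁.eq_infinitePi_map_eval, Measure.map_infinitePi_infinitePi_of_inj hf,
    h₂.eq_infinitePi_map_eval]
  exact congrArg Measure.infinitePi (funext hmarg)

theorem measure_zero_or_one_of_measurableSet_limsup_cofinite {Ω : Type*} {m0 : MeasurableSpace Ω}
    {μ : Measure Ω} {s : ι → MeasurableSpace Ω} (h_le : ∀ i, s i ≤ m0) (h_indep : iIndep s μ)
    {t : Set Ω} (ht_tail : MeasurableSet[limsup s cofinite] t) :
    μ t = 0 ∨ μ t = 1 :=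
  measure_zero_or_one_of_measurableSet_limsup h_le h_indep (p := Set.Finite)
    (ns := fun u : Finset ι => (u : Set ι)) (fun _ hu => hu.compl_mem_cofinite)
    (Monotone.directed_le fun _ _ => Finset.coe_subset.mpr) (fun u => u.finite_toSet)
    (fun i => ⟨{i}, by simp⟩) ht_tail

end ProbabilityTheory

theorem shiftConfig_iterate (k l n : ℕ) : (shiftConfig k l)^[n] = shiftConfig (n * k) (n * l) := by
  induction n with
  | zero => funext ω ij; simp [shiftConfig]
  | succ n ih =>
    rw [Function.iterate_succ', ih]
    funext ω ij
    simp only [Function.comp_apply, shiftConfig, add_mul, one_mul, add_assoc, add_comm k,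
      add_comm l]

theorem map_shiftConfig_eq_of_iIndepFun {ν₁ ν₂ : Measure (ℕ × ℕ → ℝ)}
    (h₁ : iIndepFun (fun ij (ω : ℕ × ℕ → ℝ) => ω ij) ν₁)
    (h₂ : iIndepFun (fun ij (ω : ℕ × ℕ → ℝ) => ω ij) ν₂) {k l : ℕ}
    (hmarg : ∀ i j, ν₁.map (fun ω => ω (i + k, j + l)) = ν₂.map fun ω => ω (i, j)) :
    ν₁.map (shiftConfig k l) = ν₂ :=
  h₁.map_comp_eq_of_map_eval_eq ((add_left_injective k).prodMap (add_left_injective l)) h₂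
    fun ij => hmarg ij.1 ij.2

theorem measurableSet_limsup_cofinite_of_shiftConfig_preimage_eq {k l : ℕ} (hk : 0 < k)
    {B : Set (ℕ × ℕ → ℝ)} (hB : MeasurableSet B) (hinv : shiftConfig k l ⁻¹' B = B) :
    MeasurableSet[limsup
      (fun ij => MeasurableSpace.comap (fun ω : ℕ × ℕ → ℝ => ω ij) inferInstance) cofinite] B := by
  rw [limsup_eq, MeasurableSpace.measurableSet_sInf]
  intro m hm
  rw [← coprod_cofinite] at hm
  obtain ⟨t, ht, hts⟩ := (mem_coprod_iff.mp hm).1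
  rw [Nat.cofinite_eq_atTop, mem_atTop_sets] at ht
  obtain ⟨N, hN⟩ := ht
  have hiter : (shiftConfig k l)^[N] ⁻¹' B = B := by
    rw [Set.preimage_iterate_eq]
    exact Function.iterate_fixed hinv N
  have hmeas : Measurable[m, MeasurableSpace.pi] ((shiftConfig k l)^[N]) := by
    rw [shiftConfig_iterate]
    refine measurable_pi_lambda _ fun ij => Measurable.of_comap_le (hts (hN _ ?_))
    exact le_add_left (Nat.le_mul_of_pos_right N hk)
  rw [← hiter]
  exact hmeas hB

theorem ProbabilityTheory.iIndepFun.measure_eq_zero_or_one_of_shiftConfig_preimage_eq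
    {ν : Measure (ℕ × ℕ → ℝ)} (h : iIndepFun (fun ij (ω : ℕ × ℕ → ℝ) => ω ij) ν)
    {k l : ℕ} (hk : 0 < k)
    {B : Set (ℕ × ℕ → ℝ)} (hB : MeasurableSet B) (hinv : shiftConfig k l ⁻¹' B = B) :
    ν B = 0 ∨ ν B = 1 :=
  measure_zero_or_one_of_measurableSet_limsup_cofinite
    (fun ij => (measurable_pi_apply ij).comap_le) h
    (measurableSet_limsup_cofinite_of_shiftConfig_preimage_eq hk hB hinv)

theorem annealed_measure_ergodic_exponential_general
    -- the joint distribution `μ` of the rate sequences `(a, b)` (zero-based indexing,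
    -- so `p.1 0` is `a_1` and `p.2 0` is `b_1`), a probability measure
    (μ : Measure ((ℕ → ℝ) × (ℕ → ℝ))) [IsProbabilityMeasure μ]
    -- `μ` is ergodic under `τ_k × τ_l` for every `k, l ≥ 1` (in particular stationary)
    (herg : ∀ k l : ℕ, 0 < k → 0 < l → Ergodic (shiftPair k l) μ)
    -- the quenched law of the weights: given `(a,b)`, the weights are independent and
    -- `W(i+1, j+1)` is exponential with rate `a_{i+1} + b_{j+1}`
    (P : (ℕ → ℝ) × (ℕ → ℝ) → Measure ((ℕ × ℕ) → ℝ))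
    (hP : ∀ᵐ p ∂μ,
      iIndepFun (fun ij (ω : (ℕ × ℕ) → ℝ) => ω ij) (P p) ∧
      ∀ i j : ℕ, Measure.map (fun ω : (ℕ × ℕ) → ℝ => ω (i, j)) (P p)
        = expMeasure (p.1 i + p.2 j))
    -- the annealed law of the weights
    (ℙw : Measure ((ℕ × ℕ) → ℝ)) (hℙw : ℙw = μ.bind P)
    : ∀ k l : ℕ, 0 < k → 0 < l →
      ∀ B : Set ((ℕ × ℕ) → ℝ), MeasurableSet B → shiftConfig k l ⁻¹' B = B →
        ℙw B = 0 ∨ ℙw B = 1 := by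
  intro k l hk hl B hB hinv
  by_cases hPm : AEMeasurable P μ
  swap
  -- junk case: `μ.bind P = 0`
  · simp [hℙw, Measure.bind, Measure.map_of_not_aemeasurable hPm]
  have hT := herg k l hk hl
  have hquenched_zero_one : ∀ᵐ p ∂μ, P p B = 0 ∨ P p B = 1 := hP.mono fun p hp =>
    hp.1.measure_eq_zero_or_one_of_shiftConfig_preimage_eq hk hB hinv
  have hquenched_invariant : (fun p => P p B) ∘ shiftPair k l =ᵐ[μ] fun p => P p B := by
    filter_upwards [hP, hT.toMeasurePreserving.quasiMeasurePreserving.ae hP] with p hp hTp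
    have hmap : (P p).map (shiftConfig k l) = P (shiftPair k l p) :=
      map_shiftConfig_eq_of_iIndepFun hp.1 hTp.1 fun i j => by rw [hp.2, hTp.2]; rfl
    rw [Function.comp_apply, ← hmap, Measure.map_apply
      (measurable_pi_lambda (shiftConfig k l) fun _ => measurable_pi_apply _) hB, hinv]
  obtain ⟨c, hc⟩ : ∃ c, (fun p => P p B) =ᵐ[μ] fun _ => c := hT.ae_eq_const_of_ae_eq_comp₀
    ((Measure.measurable_coe hB).comp_aemeasurable hPm).nullMeasurable hquenched_invariant
  obtain ⟨p, hp, hpc⟩ := (hquenched_zero_one.and hc).exists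
  rw [hℙw, Measure.bind_apply hB hPm, lintegral_congr_ae hc]
  simpa [← hpc] using hp

/-- The annealed law `ℙ` of the weights of the inhomogeneous exponential
corner growth model is ergodic with respect to the shift `θ_{k,l}` for every `k, l ≥ 1`:
every Borel set `B` with `θ_{k,l}⁻¹(B) = B` has `ℙ(B) ∈ {0,1}`. -/
theorem annealed_measure_ergodic_exponential
    -- the joint distribution `μ` of the rate sequences `(a, b)` (zero-based indexing,
    -- so `p.1 0` is `a_1` and `p.2 0` is `b_1`), a probability measure
    (μ : Measure ((ℕ → ℝ) × (ℕ → ℝ))) [IsProbabilityMeasure μ]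
    -- the sequences take values in `(0, ∞)`
    (hpos : ∀ᵐ p ∂μ, (∀ n, 0 < p.1 n) ∧ (∀ n, 0 < p.2 n))
    -- `μ` is ergodic under `τ_k × τ_l` for every `k, l ≥ 1` (in particular stationary)
    (herg : ∀ k l : ℕ, 0 < k → 0 < l → Ergodic (shiftPair k l) μ)
    -- the quenched law of the weights: given `(a,b)`, the weights are independent and
    -- `W(i+1, j+1)` is exponential with rate `a_{i+1} + b_{j+1}`
    (P : (ℕ → ℝ) × (ℕ → ℝ) → Measure ((ℕ × ℕ) → ℝ))
    (hP : ∀ᵐ p ∂μ,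
      iIndepFun (fun ij (ω : (ℕ × ℕ) → ℝ) => ω ij) (P p) ∧
      ∀ i j : ℕ, Measure.map (fun ω : (ℕ × ℕ) → ℝ => ω (i, j)) (P p)
        = expMeasure (p.1 i + p.2 j))
    -- the annealed law of the weights
    (ℙw : Measure ((ℕ × ℕ) → ℝ)) (hℙw : ℙw = μ.bind P)
    : ∀ k l : ℕ, 0 < k → 0 < l →
      ∀ B : Set ((ℕ × ℕ) → ℝ), MeasurableSet B → shiftConfig k l ⁻¹' B = B →
        ℙw B = 0 ∨ ℙw B = 1 :=
  annealed_measure_ergodic_exponential_general μ herg P hP ℙw hℙw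
end
end

section
/- Let a, b ∈ (0,∞) and let P be the product probability measure on ℝ³ whose three marginals are the exponential distributions with rates a, b, and a+b respectively. Let F : ℝ³ → ℝ³ be the map F(x,y,z) = (x − min(x,y) + z, y − min(x,y) + z, min(x,y)). Then P(F^{−1}(B)) = P(B) for every Borel set B ⊂ ℝ³; equivalently, the pushforward of P under F equals P. -/
/-!
`F` is piecewise linear: on `{x ≤ y}` it is `(x, y, z) ↦ (z, y - x + z, x)` and on `{x > y}` it is
`(x, y, z) ↦ (x - y + z, z, y)`. Both linear maps are involutions, so their determinants are `±1`
and they preserve Lebesgue measure; each also maps its half-space onto itself, hence `F` preserves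
Lebesgue measure. The density of `P` is `a b (a + b) exp (-(a x + b y + (a + b) z))` on the
nonnegative orthant, and both the orthant and the linear form `a x + b y + (a + b) z` are
`F`-invariant.
-/

open MeasureTheory ProbabilityTheory Set
open scoped ENNReal

noncomputable section

theorem MeasureTheory.MeasurePreserving.piecewise {α : Type*} [MeasurableSpace α]
    {μ : Measure α} {s : Set α} [DecidablePred (· ∈ s)] (hs : MeasurableSet s) {f g : α → α}
    (hf : MeasurePreserving f μ μ) (hg : MeasurePreserving g μ μ)
    (hfs : f ⁻¹' s = s) (hgs : g ⁻¹' s = s) :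
    MeasurePreserving (s.piecewise f g) μ μ := by
  have hm : Measurable (s.piecewise f g) := hf.measurable.piecewise hs hg.measurable
  refine ⟨hm, ?_⟩
  have hgsc : g ⁻¹' sᶜ = sᶜ := by rw [preimage_compl, hgs]
  have on_s : (μ.restrict s).map (s.piecewise f g) = μ.restrict s := by
    rw [Measure.map_congr (ae_restrict_of_forall_mem hs fun x hx => s.piecewise_eq_of_mem f g hx),
      ← hfs, ← Measure.restrict_map hf.measurable hs, hf.map_eq, hfs]
  have on_sc : (μ.restrict sᶜ).map (s.piecewise f g) = μ.restrict sᶜ := by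
    rw [Measure.map_congr (ae_restrict_of_forall_mem hs.compl
        fun x hx => s.piecewise_eq_of_notMem f g hx),
      ← hgsc, ← Measure.restrict_map hg.measurable hs.compl, hg.map_eq, hgsc]
  conv_lhs => rw [← Measure.restrict_add_restrict_compl (μ := μ) hs]
  rw [Measure.map_add _ _ hm, on_s, on_sc, Measure.restrict_add_restrict_compl hs]

theorem MeasureTheory.MeasurePreserving.withDensity {α : Type*} [MeasurableSpace α]
    {μ : Measure α} {F : α → α} (hF : MeasurePreserving F μ μ) {f : α → ℝ≥0∞}
    (hf : Measurable f) (hfF : ∀ x, f (F x) = f x) :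
    MeasurePreserving F (μ.withDensity f) (μ.withDensity f) := by
  refine ⟨hF.measurable, Measure.ext fun s hs => ?_⟩
  rw [Measure.map_apply hF.measurable hs, withDensity_apply _ (hF.measurable hs),
    withDensity_apply _ hs, ← hF.setLIntegral_comp_preimage hs hf]
  simp only [hfF]

theorem LinearMap.measurePreserving_of_involutive {E : Type*} [NormedAddCommGroup E]
    [NormedSpace ℝ E] [MeasurableSpace E] [BorelSpace E] [FiniteDimensional ℝ E]
    (μ : Measure E) [μ.IsAddHaarMeasure] (L : E →ₗ[ℝ] E) (hL : Function.Involutive L) :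
    MeasurePreserving L μ μ := by
  have hdet : L.det * L.det = 1 := by
    rw [← LinearMap.det_comp, show L ∘ₗ L = LinearMap.id from LinearMap.ext hL, LinearMap.det_id]
  refine ⟨L.continuous_of_finiteDimensional.measurable, ?_⟩
  rw [Measure.map_linearMap_addHaar_eq_smul_addHaar μ (left_ne_zero_of_mul_eq_one hdet)]
  rcases mul_self_eq_one_iff.mp hdet with h | h <;> simp [h]

@[fun_prop]
lemma measurable_exponentialPDF (r : ℝ) : Measurable (exponentialPDF r) :=
  (measurable_exponentialPDFReal r).ennreal_ofReal

lemma expMeasure_eq_withDensity (r : ℝ) : expMeasure r = volume.withDensity (exponentialPDF r) :=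
  rfl

def burkeMap (v : ℝ × ℝ × ℝ) : ℝ × ℝ × ℝ :=
  (v.1 - min v.1 v.2.1 + v.2.2, v.2.1 - min v.1 v.2.1 + v.2.2, min v.1 v.2.1)

def burkeMapOfLE : (ℝ × ℝ × ℝ) →ₗ[ℝ] ℝ × ℝ × ℝ where
  toFun v := (v.2.2, v.2.1 - v.1 + v.2.2, v.1)
  map_add' v w := Prod.ext rfl (Prod.ext (by simp only [Prod.fst_add, Prod.snd_add]; ring) rfl)
  map_smul' c v := Prod.ext rfl
    (Prod.ext (by simp only [Prod.smul_fst, Prod.smul_snd, smul_eq_mul, RingHom.id_apply]; ring) rfl)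

def burkeMapOfGT : (ℝ × ℝ × ℝ) →ₗ[ℝ] ℝ × ℝ × ℝ where
  toFun v := (v.1 - v.2.1 + v.2.2, v.2.2, v.2.1)
  map_add' v w := Prod.ext (by simp only [Prod.fst_add, Prod.snd_add]; ring) rfl
  map_smul' c v := Prod.ext
    (by simp only [Prod.smul_fst, Prod.smul_snd, smul_eq_mul, RingHom.id_apply]; ring) rfl

lemma burkeMapOfLE_involutive : Function.Involutive burkeMapOfLE := fun v => by
  ext <;> simp [burkeMapOfLE]

lemma burkeMapOfGT_involutive : Function.Involutive burkeMapOfGT := fun v => by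
  ext <;> simp [burkeMapOfGT]

lemma burkeMapOfLE_preimage : burkeMapOfLE ⁻¹' {v | v.1 ≤ v.2.1} = {v | v.1 ≤ v.2.1} := by
  ext v
  simp only [burkeMapOfLE, LinearMap.coe_mk, AddHom.coe_mk, mem_preimage, mem_ofPred_eq]
  constructor <;> intro h <;> linarith

lemma burkeMapOfGT_preimage : burkeMapOfGT ⁻¹' {v | v.1 ≤ v.2.1} = {v | v.1 ≤ v.2.1} := by
  ext v
  simp only [burkeMapOfGT, LinearMap.coe_mk, AddHom.coe_mk, mem_preimage, mem_ofPred_eq]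
  constructor <;> intro h <;> linarith

open Classical in
lemma burkeMap_eq_piecewise :
    burkeMap = {v | v.1 ≤ v.2.1}.piecewise burkeMapOfLE burkeMapOfGT := by
  ext1 v
  by_cases h : v.1 ≤ v.2.1
  · simp [Set.piecewise, h, burkeMap, burkeMapOfLE]
  · simp [Set.piecewise, h, burkeMap, burkeMapOfGT, min_eq_right (not_le.mp h).le]

lemma measurePreserving_burkeMap : MeasurePreserving burkeMap volume volume := by
  -- instance search does not see through `volume` on a product type
  have : (volume : Measure (ℝ × ℝ × ℝ)).IsAddHaarMeasure := Measure.prod.instIsAddHaarMeasure _ _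
  rw [burkeMap_eq_piecewise]
  exact .piecewise (measurableSet_le measurable_fst measurable_snd.fst)
    (burkeMapOfLE.measurePreserving_of_involutive volume burkeMapOfLE_involutive)
    (burkeMapOfGT.measurePreserving_of_involutive volume burkeMapOfGT_involutive)
    burkeMapOfLE_preimage burkeMapOfGT_preimage

lemma burkeMap_nonneg_iff (v : ℝ × ℝ × ℝ) : 0 ≤ burkeMap v ↔ 0 ≤ v := by
  obtain ⟨x, y, z⟩ := v
  simp only [burkeMap, Prod.le_def, Prod.fst_zero, Prod.snd_zero]
  rcases le_total x y with h | h
  · simp only [min_eq_left h]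
    constructor <;> rintro ⟨h1, h2, h3⟩ <;> refine ⟨?_, ?_, ?_⟩ <;> linarith
  · simp only [min_eq_right h]
    constructor <;> rintro ⟨h1, h2, h3⟩ <;> refine ⟨?_, ?_, ?_⟩ <;> linarith

lemma exponentialPDF_mul_exponentialPDF_mul_exponentialPDF {r₁ r₂ : ℝ} (h₁ : 0 ≤ r₁)
    (h₂ : 0 ≤ r₂) (r₃ : ℝ) (v : ℝ × ℝ × ℝ) :
    exponentialPDF r₁ v.1 * (exponentialPDF r₂ v.2.1 * exponentialPDF r₃ v.2.2) =
      if 0 ≤ v then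
        ENNReal.ofReal (r₁ * r₂ * r₃ * Real.exp (-(r₁ * v.1 + r₂ * v.2.1 + r₃ * v.2.2)))
      else 0 := by
  obtain ⟨x, y, z⟩ := v
  by_cases hv : (0 : ℝ × ℝ × ℝ) ≤ (x, y, z)
  · rw [if_pos hv]
    obtain ⟨hx, hy, hz⟩ : 0 ≤ x ∧ 0 ≤ y ∧ 0 ≤ z := hv
    rw [exponentialPDF_of_nonneg hx, exponentialPDF_of_nonneg hy,
      exponentialPDF_of_nonneg hz, ← ENNReal.ofReal_mul (by positivity),
      ← ENNReal.ofReal_mul (by positivity)]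
    congr 1
    simp only [neg_add, Real.exp_add]
    ring
  · rw [if_neg hv]
    simp only [Prod.le_def, Prod.fst_zero, Prod.snd_zero, not_and_or, not_le] at hv
    rcases hv with h | h | h <;> simp [exponentialPDF_of_neg h]

lemma exponentialPDF_prod_comp_burkeMap {a b : ℝ} (ha : 0 ≤ a) (hb : 0 ≤ b)
    (v : ℝ × ℝ × ℝ) :
    exponentialPDF a (burkeMap v).1 *
        (exponentialPDF b (burkeMap v).2.1 * exponentialPDF (a + b) (burkeMap v).2.2) =
      exponentialPDF a v.1 * (exponentialPDF b v.2.1 * exponentialPDF (a + b) v.2.2) := by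
  have hexp : a * (burkeMap v).1 + b * (burkeMap v).2.1 + (a + b) * (burkeMap v).2.2 =
      a * v.1 + b * v.2.1 + (a + b) * v.2.2 := by
    simp only [burkeMap]
    ring
  simp only [exponentialPDF_mul_exponentialPDF_mul_exponentialPDF ha hb, hexp,
    burkeMap_nonneg_iff]

lemma expMeasure_prod_expMeasure_prod (r₁ r₂ r₃ : ℝ) :
    (expMeasure r₁).prod ((expMeasure r₂).prod (expMeasure r₃)) =
      volume.withDensity fun v : ℝ × ℝ × ℝ =>
        exponentialPDF r₁ v.1 * (exponentialPDF r₂ v.2.1 * exponentialPDF r₃ v.2.2) := by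
  simp only [expMeasure_eq_withDensity]
  rw [prod_withDensity (by fun_prop) (by fun_prop), prod_withDensity (by fun_prop) (by fun_prop)]
  rfl

/-- Let `P` be the product measure on `ℝ³` whose marginals are exponential
with rates `a`, `b` and `a+b`, and let `F(x,y,z) = (x − x∧y + z, y − x∧y + z, x∧y)`.
Then `P(F⁻¹(B)) = P(B)` for every Borel `B`; equivalently, `map F P = P`. -/
theorem exponential_burke_invariance
    (a b : ℝ) (ha : 0 < a) (hb : 0 < b)
    (P : Measure (ℝ × ℝ × ℝ))
    (hP : P = (expMeasure a).prod ((expMeasure b).prod (expMeasure (a + b))))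
    (F : ℝ × ℝ × ℝ → ℝ × ℝ × ℝ)
    (hF : F = fun v =>
      (v.1 - min v.1 v.2.1 + v.2.2, v.2.1 - min v.1 v.2.1 + v.2.2, min v.1 v.2.1)) :
    (∀ B : Set (ℝ × ℝ × ℝ), MeasurableSet B → P (F ⁻¹' B) = P B) ∧
      Measure.map F P = P := by
  have hFP : MeasurePreserving F P P := by
    rw [hP, hF, expMeasure_prod_expMeasure_prod]
    exact measurePreserving_burkeMap.withDensity (by fun_prop)
      (exponentialPDF_prod_comp_burkeMap ha.le hb.le)
  exact ⟨fun B hB => hFP.measure_preimage hB.nullMeasurableSet, hFP.map_eq⟩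
end
end

section
/- Let a, b ∈ (0,1) and let P be the product probability measure on ℤ_+³ whose three marginals are the geometric distributions with parameters a, b, and ab respectively. Let F be the map F(x,y,z) = (x − min(x,y) + z, y − min(x,y) + z, min(x,y)). Then P(F^{−1}(B)) = P(B) for every set B ⊂ ℤ_+³; equivalently, the pushforward of P under F equals P. -/
open MeasureTheory ProbabilityTheory Filter Set Topology
open scoped ENNReal

noncomputable section

/-- The geometric distribution on `ℕ` with (fail) parameter `q`, i.e. the law of a random
variable `X` with `P(X ≥ k) = q ^ k`, that is, `P(X = k) = (1 - q) * q ^ k`. -/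
def geomMeasure (q : ℝ) : Measure ℕ :=
  Measure.sum fun k => ENNReal.ofReal ((1 - q) * q ^ k) • Measure.dirac k

lemma geomMeasure_singleton (q : ℝ) (k : ℕ) :
    geomMeasure q {k} = ENNReal.ofReal ((1 - q) * q ^ k) := by
  rw [geomMeasure, Measure.sum_apply _ (measurableSet_singleton k)]
  rw [tsum_eq_single k (fun j hj => by simp [Measure.dirac_apply', hj])]
  simp

instance geom_sfinite (q : ℝ) : SFinite (geomMeasure q) := by
  unfold geomMeasure; infer_instance

/-- Let `P` be the product measure on `ℤ₊³` whose marginals are geometric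
with parameters `a`, `b` and `a*b`, and let `F(x,y,z) = (x − x∧y + z, y − x∧y + z, x∧y)`.
Then `P(F⁻¹(B)) = P(B)` for every `B`; equivalently, `map F P = P`. -/
theorem geometric_burke_invariance
    (a b : ℝ) (ha : a ∈ Set.Ioo (0 : ℝ) 1) (hb : b ∈ Set.Ioo (0 : ℝ) 1)
    (P : Measure (ℕ × ℕ × ℕ))
    (hP : P = (geomMeasure a).prod ((geomMeasure b).prod (geomMeasure (a * b))))
    (F : ℕ × ℕ × ℕ → ℕ × ℕ × ℕ)
    (hF : F = fun v =>
      (v.1 - min v.1 v.2.1 + v.2.2, v.2.1 - min v.1 v.2.1 + v.2.2, min v.1 v.2.1)) :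
    (∀ B : Set (ℕ × ℕ × ℕ), P (F ⁻¹' B) = P B) ∧ Measure.map F P = P := by
  have ha0 := ha.1; have ha1 := ha.2; have hb0 := hb.1; have hb1 := hb.2
  -- singleton values of P
  have hsing : ∀ x y z : ℕ, P {(x, y, z)} =
      ENNReal.ofReal ((1 - a) * a ^ x) * (ENNReal.ofReal ((1 - b) * b ^ y) *
        ENNReal.ofReal ((1 - a * b) * (a * b) ^ z)) := by
    intro x y z
    have h1 : ({(x, y, z)} : Set (ℕ × ℕ × ℕ)) = {x} ×ˢ ({y} ×ˢ {z}) := by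
      ext ⟨p, q, r⟩
      simp [Prod.ext_iff, and_assoc]
    rw [hP, h1, Measure.prod_prod, Measure.prod_prod,
      geomMeasure_singleton, geomMeasure_singleton, geomMeasure_singleton]
  -- F is an involution
  have hFF : ∀ p : ℕ × ℕ × ℕ, F (F p) = p := by
    rintro ⟨x, y, z⟩
    simp only [hF]
    refine Prod.ext ?_ (Prod.ext ?_ ?_) <;> simp <;> omega
  -- key real identity
  have key : ∀ x y z : ℕ,
      (1 - a) * a ^ (x - min x y + z) * ((1 - b) * b ^ (y - min x y + z) *
        ((1 - a * b) * (a * b) ^ (min x y))) =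
      (1 - a) * a ^ x * ((1 - b) * b ^ y * ((1 - a * b) * (a * b) ^ z)) := by
    have gen : ∀ u v m z : ℕ,
        (1 - a) * a ^ (u + z) * ((1 - b) * b ^ (v + z) * ((1 - a * b) * (a * b) ^ m)) =
        (1 - a) * a ^ (u + m) * ((1 - b) * b ^ (v + m) * ((1 - a * b) * (a * b) ^ z)) := by
      intros u v m z
      simp only [pow_add, mul_pow]
      ring
    intro x y z
    rw [show a ^ x = a ^ ((x - min x y) + min x y) by congr 1; omega,
        show b ^ y = b ^ ((y - min x y) + min x y) by congr 1; omega]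
    exact gen (x - min x y) (y - min x y) (min x y) z
  -- singleton invariance
  have hinv : ∀ p : ℕ × ℕ × ℕ, P {F p} = P {p} := by
    rintro ⟨x, y, z⟩
    have hFp : F (x, y, z) =
        (x - min x y + z, y - min x y + z, min x y) := by simp [hF]
    rw [hFp, hsing, hsing]
    have n1 : (0:ℝ) ≤ (1 - a) * a ^ (x - min x y + z) :=
      mul_nonneg (by linarith) (pow_nonneg ha0.le _)
    have n2 : (0:ℝ) ≤ (1 - b) * b ^ (y - min x y + z) :=
      mul_nonneg (by linarith) (pow_nonneg hb0.le _)
    have n3 : (0:ℝ) ≤ (1 - a * b) * (a * b) ^ (min x y) :=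
      mul_nonneg (by nlinarith) (pow_nonneg (by positivity) _)
    have n1' : (0:ℝ) ≤ (1 - a) * a ^ x := mul_nonneg (by linarith) (pow_nonneg ha0.le _)
    have n2' : (0:ℝ) ≤ (1 - b) * b ^ y := mul_nonneg (by linarith) (pow_nonneg hb0.le _)
    have n3' : (0:ℝ) ≤ (1 - a * b) * (a * b) ^ z :=
      mul_nonneg (by nlinarith) (pow_nonneg (by positivity) _)
    rw [← ENNReal.ofReal_mul n2, ← ENNReal.ofReal_mul n1,
        ← ENNReal.ofReal_mul n2', ← ENNReal.ofReal_mul n1']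
    exact congrArg ENNReal.ofReal (key x y z)
  have hFmeas : Measurable F := measurable_of_countable F
  have hpre : ∀ p : ℕ × ℕ × ℕ, F ⁻¹' {p} = {F p} := by
    intro p
    ext q
    constructor
    · intro hq
      have : F q = p := hq
      simp only [Set.mem_singleton_iff]
      rw [← this, hFF]
    · rintro rfl
      exact hFF p
  have hmap : Measure.map F P = P := by
    apply MeasureTheory.Measure.ext_of_singleton
    intro p
    rw [Measure.map_apply hFmeas (measurableSet_singleton p), hpre, hinv]
  refine ⟨fun B => ?_, hmap⟩
  rw [← Measure.map_apply hFmeas ((Set.to_countable B).measurableSet), hmap]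
end
end
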